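/- Let U ⊆ ℂ be open with x·(x−1)·(x+8) ≠ 0 for all x ∈ U. Let Ψ : ℂ → ℂ be twice differentiable on U and satisfy x(x−1)(x+8)·Ψ''(x) + (3x²+14x−8)·Ψ'(x) + (x+2)·Ψ(x) = 0 for all x ∈ U, and let g : ℂ → ℂ be twice differentiable on U with g(x)² = x(x−1)(x+8) for all x ∈ U. Then ψ := g·Ψ solves ψ'' = Q₃·ψ on U, where Q₃(x) := −(1/4)·(x⁴+8x³+72x²−64x+64)/(x²(x−1)²(x+8)²). -/

import Mathlib

/-! The third Chudnovsky equation is self-adjoint: with `p = x(x-1)(x+8)` it reads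
`p Ψ'' + p' Ψ' + (x+2) Ψ = 0`. For any self-adjoint equation `p Ψ'' + p' Ψ' + r Ψ = 0` and
`g² = p`, differentiating `g² = p` twice gives `2 g g' = p'` and `2 g'² + 2 g g'' = p''`; these make
the first-order terms of `(g Ψ)''` cancel and leave `(g Ψ)'' = (2 p p'' - p'² - 4 p r) / (4 p²) · g Ψ`.
For the Chudnovsky data that coefficient is `Q₃`. -/

open Complex

/-- `f` solves the equation `ψ'' = Q·ψ` on the open set `U`. -/
def SolvesOn (Q f : ℂ → ℂ) (U : Set ℂ) : Prop :=
  (∀ x ∈ U, DifferentiableAt ℂ f x) ∧ (∀ x ∈ U, DifferentiableAt ℂ (deriv f) x) ∧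
    ∀ x ∈ U, deriv (deriv f) x = Q x * f x

open Set Filter Topology

section Calculus

variable {𝕜 : Type*} [NontriviallyNormedField 𝕜] {U : Set 𝕜} {f g : 𝕜 → 𝕜} {x a b : 𝕜}

theorem HasDerivAt.eq_of_eqOn {h : 𝕜 → 𝕜} (hU : IsOpen U) (hx : x ∈ U) (heq : EqOn f h U)
    (hf : HasDerivAt f a x) (hh : HasDerivAt h b x) : a = b :=
  hf.unique (hh.congr_of_eventuallyEq (eventuallyEq_of_mem (hU.mem_nhds hx) heq))

theorem eventuallyEq_deriv_mul (hU : IsOpen U) (hx : x ∈ U)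
    (hf : ∀ y ∈ U, DifferentiableAt 𝕜 f y) (hg : ∀ y ∈ U, DifferentiableAt 𝕜 g y) :
    deriv (fun y => f y * g y) =ᶠ[𝓝 x] fun y => deriv f y * g y + f y * deriv g y :=
  eventuallyEq_of_mem (hU.mem_nhds hx) fun y hy => deriv_mul (hf y hy) (hg y hy)

theorem hasDerivAt_deriv_mul (hU : IsOpen U) (hx : x ∈ U)
    (hf : ∀ y ∈ U, DifferentiableAt 𝕜 f y) (hf' : ∀ y ∈ U, DifferentiableAt 𝕜 (deriv f) y)
    (hg : ∀ y ∈ U, DifferentiableAt 𝕜 g y) (hg' : ∀ y ∈ U, DifferentiableAt 𝕜 (deriv g) y) :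
    HasDerivAt (deriv fun y => f y * g y)
      (deriv (deriv f) x * g x + 2 * deriv f x * deriv g x + f x * deriv (deriv g) x) x := by
  have hsum := ((hf' x hx).hasDerivAt.fun_mul (hg x hx).hasDerivAt).fun_add
    ((hf x hx).hasDerivAt.fun_mul (hg' x hx).hasDerivAt)
  exact (hsum.congr_of_eventuallyEq (eventuallyEq_deriv_mul hU hx hf hg)).congr_deriv (by ring)

theorem two_mul_mul_deriv_eq_of_sq_eqOn {p p' : 𝕜 → 𝕜} (hU : IsOpen U) (hx : x ∈ U)
    (hg : ∀ y ∈ U, DifferentiableAt 𝕜 g y) (hp : HasDerivAt p (p' x) x)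
    (hsq : EqOn (fun y => g y ^ 2) p U) :
    2 * g x * deriv g x = p' x := by
  have h := ((hg x hx).hasDerivAt.fun_pow 2).eq_of_eqOn hU hx hsq hp
  simpa using h

theorem two_mul_deriv_sq_add_eq_of_sq_eqOn {p p' p'' : 𝕜 → 𝕜} (hU : IsOpen U) (hx : x ∈ U)
    (hg : ∀ y ∈ U, DifferentiableAt 𝕜 g y) (hg' : ∀ y ∈ U, DifferentiableAt 𝕜 (deriv g) y)
    (hp : ∀ y ∈ U, HasDerivAt p (p' y) y) (hp' : HasDerivAt p' (p'' x) x)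
    (hsq : EqOn (fun y => g y ^ 2) p U) :
    2 * deriv g x ^ 2 + 2 * g x * deriv (deriv g) x = p'' x := by
  have hfirst : EqOn (fun y => 2 * g y * deriv g y) p' U := fun y hy =>
    two_mul_mul_deriv_eq_of_sq_eqOn hU hy hg (hp y hy) hsq
  have h := (((hg x hx).hasDerivAt.const_mul 2).fun_mul (hg' x hx).hasDerivAt).eq_of_eqOn
    hU hx hfirst hp'
  linear_combination h

end Calculus

theorem SolvesOn.congr {Q Q' f : ℂ → ℂ} {U : Set ℂ} (h : SolvesOn Q f U) (hQ : EqOn Q Q' U) :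
    SolvesOn Q' f U :=
  ⟨h.1, h.2.1, fun x hx => hQ hx ▸ h.2.2 x hx⟩

/-- Liouville normal form of the self-adjoint equation `(p Ψ')' + r Ψ = 0`. -/
theorem solvesOn_mul_of_sq_eq {U : Set ℂ} {p p' p'' r Ψ g : ℂ → ℂ} (hU : IsOpen U)
    (hp : ∀ x ∈ U, HasDerivAt p (p' x) x) (hp' : ∀ x ∈ U, HasDerivAt p' (p'' x) x)
    (hp0 : ∀ x ∈ U, p x ≠ 0)
    (hΨ1 : ∀ x ∈ U, DifferentiableAt ℂ Ψ x) (hΨ2 : ∀ x ∈ U, DifferentiableAt ℂ (deriv Ψ) x)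
    (hode : ∀ x ∈ U, p x * deriv (deriv Ψ) x + p' x * deriv Ψ x + r x * Ψ x = 0)
    (hg1 : ∀ x ∈ U, DifferentiableAt ℂ g x) (hg2 : ∀ x ∈ U, DifferentiableAt ℂ (deriv g) x)
    (hgsq : EqOn (fun x => g x ^ 2) p U) :
    SolvesOn (fun x => (2 * p x * p'' x - p' x ^ 2 - 4 * p x * r x) / (4 * p x ^ 2))
      (fun x => g x * Ψ x) U := by
  refine ⟨fun x hx => (hg1 x hx).mul (hΨ1 x hx),
    fun x hx => (hasDerivAt_deriv_mul hU hx hg1 hg2 hΨ1 hΨ2).differentiableAt, fun x hx => ?_⟩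
  have hne : 4 * p x ^ 2 ≠ 0 := mul_ne_zero (by norm_num) (pow_ne_zero 2 (hp0 x hx))
  rw [(hasDerivAt_deriv_mul hU hx hg1 hg2 hΨ1 hΨ2).deriv, div_mul_eq_mul_div, eq_div_iff hne]
  have hode_x := hode x hx
  have hsq_x : g x ^ 2 = p x := hgsq hx
  rw [← hsq_x, ← two_mul_mul_deriv_eq_of_sq_eqOn hU hx hg1 (hp x hx) hgsq] at hode_x ⊢
  rw [← two_mul_deriv_sq_add_eq_of_sq_eqOn hU hx hg1 hg2 hp (hp' x hx) hgsq]
  linear_combination 4 * g x ^ 3 * hode_x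

theorem chudnovsky_three_normal_form
    (U : Set ℂ) (hU : IsOpen U)
    (hUne : ∀ x ∈ U, x * (x - 1) * (x + 8) ≠ 0)
    (Ψ g : ℂ → ℂ)
    (hΨ1 : ∀ x ∈ U, DifferentiableAt ℂ Ψ x)
    (hΨ2 : ∀ x ∈ U, DifferentiableAt ℂ (deriv Ψ) x)
    (hode : ∀ x ∈ U, x * (x - 1) * (x + 8) * deriv (deriv Ψ) x
      + (3 * x ^ 2 + 14 * x - 8) * deriv Ψ x + (x + 2) * Ψ x = 0)
    (hg1 : ∀ x ∈ U, DifferentiableAt ℂ g x)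
    (hg2 : ∀ x ∈ U, DifferentiableAt ℂ (deriv g) x)
    (hgsq : ∀ x ∈ U, g x ^ 2 = x * (x - 1) * (x + 8)) :
    SolvesOn (fun x => -(1 / 4) * (x ^ 4 + 8 * x ^ 3 + 72 * x ^ 2 - 64 * x + 64)
        / (x ^ 2 * (x - 1) ^ 2 * (x + 8) ^ 2))
      (fun x => g x * Ψ x) U := by
  have hp (x : ℂ) : HasDerivAt (fun y => y * (y - 1) * (y + 8)) (3 * x ^ 2 + 14 * x - 8) x :=
    (((hasDerivAt_id' x).fun_mul ((hasDerivAt_id' x).sub_const 1)).fun_mul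
      ((hasDerivAt_id' x).add_const 8)).congr_deriv (by ring)
  have hp' (x : ℂ) : HasDerivAt (fun y => 3 * y ^ 2 + 14 * y - 8) (6 * x + 14) x :=
    ((((hasDerivAt_pow 2 x).const_mul 3).add ((hasDerivAt_id' x).const_mul 14)).sub_const
      8).congr_deriv (by ring)
  refine (solvesOn_mul_of_sq_eq hU (fun x _ => hp x) (fun x _ => hp' x) hUne hΨ1 hΨ2 hode
    hg1 hg2 fun x hx => hgsq x hx).congr fun x hx => ?_
  have hne := hUne x hx
  rw [show x ^ 2 * (x - 1) ^ 2 * (x + 8) ^ 2 = (x * (x - 1) * (x + 8)) ^ 2 by ring]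
  field_simp
  ring
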